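/- Let A, B, X be n×n complex matrices with A and B positive definite, let λ₁,…,λₙ be the eigenvalues of A and ν₁,…,νₙ the eigenvalues of B, and set K̲ = min{ K((λᵢ/νⱼ)^{1/2}, 2) : i, j = 1,…,n }. If 0 < v ≤ 1/2, then ‖(1 − v)AX + vXB‖_F² − (1 − v)²‖AX − XB‖_F² ≤ K̲^{−r̂₁} ‖A^{1−v} X B^{v}‖_F² − r₁‖A^{1/2} X B^{1/2} − XB‖_F², where r = min{v, 1 − v}, r₁ = min{2r, 1 − 2r} and r̂₁ = min{2r₁, 1 − 2r₁}. -/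

import Mathlib

open Matrix
open scoped ComplexOrder

/-!
Write `A = U diag(λ) U*`, `B = V diag(ν) V*` and `Y = U* X V`. Every matrix in the inequality is
then `U (C ∘ Y) V*` for a real matrix `C` whose `(i, j)` entry depends only on `λᵢ` and `νⱼ`, so
by unitary invariance of the Frobenius norm the inequality is a combination, with weights
`|Yᵢⱼ|²`, of scalar inequalities in `a = λᵢ`, `b = νⱼ`. Putting `a = t² b`, the scalar inequality
becomes `P(t) ≤ K(t)^(-r̂₁) t^(4-4v)` for a quadratic `P`. This follows from the Kantorovich
refinement `K(t)^min(α, 1-α) t^α ≤ 1 - α + α t` of Young's inequality, with `α = 4v` when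
`v ≤ 1/4` and `α = 4v - 1` otherwise (so that `min(α, 1-α) = r̂₁`), because
`P(t) (1 - α + α t) ≤ t^(4-4v+α)` is a polynomial inequality whose defect is a square.
-/

/-- Real power of a matrix, defined for Hermitian matrices via the spectral
decomposition (functional calculus); junk value otherwise. -/
noncomputable def mrpow {n : ℕ} (A : Matrix (Fin n) (Fin n) ℂ) (t : ℝ) :
    Matrix (Fin n) (Fin n) ℂ :=
  if h : A.IsHermitian then
    (h.eigenvectorUnitary : Matrix (Fin n) (Fin n) ℂ)
      * Matrix.diagonal (fun i => ((h.eigenvalues i ^ t : ℝ) : ℂ))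
      * star (h.eigenvectorUnitary : Matrix (Fin n) (Fin n) ℂ)
  else A

/-- The squared Hilbert-Schmidt (Frobenius) norm `‖A‖_F^2`. -/
noncomputable def frobSq {n : ℕ} (A : Matrix (Fin n) (Fin n) ℂ) : ℝ :=
  ∑ i : Fin n, ∑ j : Fin n, ‖A i j‖ ^ 2

/-- The Kantorovich constant `K(t, 2) = (t + 1)^2 / (4 t)`. -/
noncomputable def Kant (t : ℝ) : ℝ := (t + 1) ^ 2 / (4 * t)

lemma kant_pos {t : ℝ} (ht : 0 < t) : 0 < Kant t := by
  unfold Kant; positivity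

lemma kant_rpow_mul_rpow {u : ℝ} (hu : 0 < u) (m : ℝ) :
    Kant u ^ m * u ^ m = ((u + 1) / 2) ^ (2 * m) := by
  have h : Kant u * u = ((u + 1) / 2) ^ 2 := by unfold Kant; field_simp; ring
  rw [← Real.mul_rpow (kant_pos hu).le hu.le, h, ← Real.rpow_natCast,
    ← Real.rpow_mul (by positivity)]
  norm_num

/-- Zuo–Shi–Fujii refinement of Young's inequality. -/
lemma kant_rpow_min_mul_rpow_le {u α : ℝ} (hu : 0 < u) (hα0 : 0 ≤ α) (hα1 : α ≤ 1) :
    Kant u ^ min α (1 - α) * u ^ α ≤ 1 - α + α * u := by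
  have hw : (0 : ℝ) ≤ (u + 1) / 2 := by positivity
  rcases le_total α (1 / 2) with hα | hα
  · rw [min_eq_left (by linarith), kant_rpow_mul_rpow hu]
    have := Real.geom_mean_le_arith_mean2_weighted (by linarith) (by linarith) hw zero_le_one
      (add_sub_cancel (2 * α) 1)
    rw [Real.one_rpow, mul_one] at this
    linarith
  · rw [min_eq_right (by linarith)]
    have hsplit : u ^ α = u ^ (1 - α) * u ^ (2 * α - 1) := by
      rw [← Real.rpow_add hu]; ring_nf
    rw [hsplit, ← mul_assoc, kant_rpow_mul_rpow hu]
    have := Real.geom_mean_le_arith_mean2_weighted (by linarith) (by linarith) hw hu.le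
      (show 2 * (1 - α) + (2 * α - 1) = 1 by ring)
    linarith

lemma le_kant_rpow_neg_mul_rpow {t α β P : ℝ} (ht : 0 < t) (hα0 : 0 ≤ α) (hα1 : α ≤ 1)
    (hP : P * (1 - α + α * t) ≤ t ^ (β + α)) :
    P ≤ Kant t ^ (-min α (1 - α)) * t ^ β := by
  rcases le_or_gt P 0 with hP0 | hP0
  · exact hP0.trans (mul_nonneg (Real.rpow_nonneg (kant_pos ht).le _) (Real.rpow_nonneg ht.le _))
  have hK : 0 < Kant t ^ min α (1 - α) := Real.rpow_pos_of_pos (kant_pos ht) _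
  have hyoung := kant_rpow_min_mul_rpow_le ht hα0 hα1
  rw [Real.rpow_neg (kant_pos ht).le, le_inv_mul_iff₀ hK]
  refine le_of_mul_le_mul_right ?_ (Real.rpow_pos_of_pos ht α)
  calc Kant t ^ min α (1 - α) * P * t ^ α = P * (Kant t ^ min α (1 - α) * t ^ α) := by ring
    _ ≤ P * (1 - α + α * t) := mul_le_mul_of_nonneg_left hyoung hP0.le
    _ ≤ t ^ (β + α) := hP
    _ = t ^ β * t ^ α := Real.rpow_add ht β α

lemma refined_young_sq_normalized {t v r1 rh1 : ℝ} (ht : 0 < t) (hv0 : 0 < v) (hv : v ≤ 1 / 2)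
    (hr1 : r1 = min (2 * v) (1 - 2 * v)) (hrh1 : rh1 = min (2 * r1) (1 - 2 * r1)) :
    2 * (1 - v) * t ^ 2 - (1 - 2 * v) + r1 * (t - 1) ^ 2 ≤
      Kant t ^ (-rh1) * t ^ (4 - 4 * v) := by
  rcases le_total v (1 / 4) with hv4 | hv4
  · rw [min_eq_left (by linarith)] at hr1
    subst hr1
    rw [hrh1, show 2 * (2 * v) = 4 * v by ring]
    refine le_kant_rpow_neg_mul_rpow ht (by linarith) (by linarith) ?_
    rw [show 4 - 4 * v + 4 * v = ((4 : ℕ) : ℝ) by norm_num, Real.rpow_natCast]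
    -- the defect is `((t - 1) * (t + 1 - 4 v)) ^ 2`
    nlinarith [sq_nonneg ((t - 1) * (t + 1 - 4 * v))]
  · rw [min_eq_right (by linarith)] at hr1
    subst hr1
    rw [hrh1, min_comm, show 1 - 2 * (1 - 2 * v) = 4 * v - 1 by ring,
      show 2 * (1 - 2 * v) = 1 - (4 * v - 1) by ring]
    refine le_kant_rpow_neg_mul_rpow ht (by linarith) (by linarith) ?_
    rw [show 4 - 4 * v + (4 * v - 1) = ((3 : ℕ) : ℝ) by norm_num, Real.rpow_natCast]
    -- the defect is `t * ((2 - 4 v) * (t - 1)) ^ 2`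
    nlinarith [mul_nonneg ht.le (sq_nonneg ((2 - 4 * v) * (t - 1)))]

lemma refined_young_sq {a b v r1 rh1 K : ℝ} (ha : 0 < a) (hb : 0 < b) (hv0 : 0 < v)
    (hv : v ≤ 1 / 2) (hr1 : r1 = min (2 * v) (1 - 2 * v)) (hrh1 : rh1 = min (2 * r1) (1 - 2 * r1))
    (hK0 : 0 < K) (hK : K ≤ Kant (Real.sqrt (a / b))) :
    ((1 - v) * a + v * b) ^ 2 - (1 - v) ^ 2 * (a - b) ^ 2 ≤
      K ^ (-rh1) * (a ^ (1 - v) * b ^ v) ^ 2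
        - r1 * (a ^ (1 / 2 : ℝ) * b ^ (1 / 2 : ℝ) - b) ^ 2 := by
  have hrh1_nonneg : 0 ≤ rh1 := by
    have hr1_le : r1 ≤ 1 / 2 :=
      hr1 ▸ min_le_iff.2 ((le_total (2 * v) (1 / 2)).imp_right fun h => by linarith)
    have hr1_nonneg : 0 ≤ r1 := hr1 ▸ le_min (by linarith) (by linarith)
    exact hrh1 ▸ le_min (by linarith) (by linarith)
  have hKpow := Real.rpow_le_rpow_of_nonpos hK0 hK (neg_nonpos.2 hrh1_nonneg)
  obtain ⟨t, ht, rfl⟩ : ∃ t, 0 < t ∧ a = t ^ 2 * b :=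
    ⟨√(a / b), by positivity, by rw [Real.sq_sqrt (by positivity)]; field_simp⟩
  have hsqrt : √(t ^ 2 * b / b) = t := by
    rw [mul_div_cancel_right₀ _ hb.ne', Real.sqrt_sq ht.le]
  have hhalf : (t ^ 2 * b) ^ (1 / 2 : ℝ) * b ^ (1 / 2 : ℝ) = t * b := by
    rw [← Real.sqrt_eq_rpow, ← Real.sqrt_eq_rpow, ← Real.sqrt_mul (by positivity),
      show t ^ 2 * b * b = (t * b) ^ 2 by ring, Real.sqrt_sq (by positivity)]
  have hgeo : ((t ^ 2 * b) ^ (1 - v) * b ^ v) ^ 2 = t ^ (4 - 4 * v) * b ^ 2 := by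
    rw [Real.mul_rpow (by positivity) hb.le, mul_assoc, ← Real.rpow_add hb, sub_add_cancel,
      Real.rpow_one, ← Real.rpow_natCast_mul ht.le, mul_pow, ← Real.rpow_mul_natCast ht.le]
    ring_nf
  have key := mul_le_mul_of_nonneg_left
    (refined_young_sq_normalized ht hv0 hv hr1 hrh1) (sq_nonneg b)
  rw [hsqrt] at hKpow
  rw [hhalf, hgeo]
  have := mul_le_mul_of_nonneg_right hKpow
    (mul_nonneg (Real.rpow_nonneg ht.le (4 - 4 * v)) (sq_nonneg b))
  linear_combination key + this

section Frobenius

variable {n : ℕ}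

lemma frobSq_eq_re_trace (M : Matrix (Fin n) (Fin n) ℂ) : frobSq M = (star M * M).trace.re := by
  rw [frobSq, trace, Complex.re_sum, Finset.sum_comm]
  refine Finset.sum_congr rfl fun j _ => ?_
  simp only [diag_apply, mul_apply, star_apply, RCLike.star_def, Complex.re_sum]
  refine Finset.sum_congr rfl fun i _ => ?_
  rw [Complex.sq_norm, ← Complex.normSq_eq_conj_mul_self, Complex.ofReal_re]

lemma frobSq_unitary_mul_mul_unitary {U V : Matrix (Fin n) (Fin n) ℂ}
    (hU : U ∈ unitaryGroup (Fin n) ℂ) (hV : V ∈ unitaryGroup (Fin n) ℂ)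
    (M : Matrix (Fin n) (Fin n) ℂ) : frobSq (U * M * V) = frobSq M := by
  have hstar : star (U * M * V) * (U * M * V) = star V * (star M * M * V) := by
    simp only [star_mul, mul_assoc]
    rw [← mul_assoc (star U) U, Unitary.star_mul_self_of_mem hU, one_mul]
  rw [frobSq_eq_re_trace, frobSq_eq_re_trace, hstar, trace_mul_comm, mul_assoc,
    Unitary.mul_star_self_of_mem hV, mul_one]

lemma frobSq_eq_sum_of_apply_eq_mul {M Y : Matrix (Fin n) (Fin n) ℂ} (c : Fin n → Fin n → ℝ)
    (h : ∀ i j, M i j = c i j * Y i j) :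
    frobSq M = ∑ i, ∑ j, c i j ^ 2 * ‖Y i j‖ ^ 2 := by
  simp only [frobSq, h, norm_mul, mul_pow, Complex.norm_real, Real.norm_eq_abs, sq_abs]

end Frobenius

section EigenCoords

variable {n : ℕ} {A B : Matrix (Fin n) (Fin n) ℂ}

lemma mrpow_of_isHermitian (hA : A.IsHermitian) (t : ℝ) :
    mrpow A t = hA.eigenvectorUnitary * diagonal (fun i => ((hA.eigenvalues i ^ t : ℝ) : ℂ))
      * star (hA.eigenvectorUnitary : Matrix (Fin n) (Fin n) ℂ) :=
  dif_pos hA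

lemma mrpow_one (hA : A.IsHermitian) : mrpow A 1 = A := by
  conv_rhs => rw [hA.spectral_theorem]
  simp [mrpow_of_isHermitian hA, Function.comp_def]

lemma mrpow_zero (hA : A.IsHermitian) : mrpow A 0 = 1 := by
  simp [mrpow_of_isHermitian hA]

noncomputable def eigenCoords (hA : A.IsHermitian) (hB : B.IsHermitian) :
    Matrix (Fin n) (Fin n) ℂ →ₗ[ℂ] Matrix (Fin n) (Fin n) ℂ where
  toFun X := star (hA.eigenvectorUnitary : Matrix (Fin n) (Fin n) ℂ) * X * hB.eigenvectorUnitary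
  map_add' X Y := by simp only [Matrix.mul_add, Matrix.add_mul]
  map_smul' c X := by simp

variable (hA : A.IsHermitian) (hB : B.IsHermitian)

lemma frobSq_eigenCoords (X : Matrix (Fin n) (Fin n) ℂ) :
    frobSq (eigenCoords hA hB X) = frobSq X :=
  frobSq_unitary_mul_mul_unitary (Unitary.star_mem hA.eigenvectorUnitary.2)
    hB.eigenvectorUnitary.2 X

lemma eigenCoords_mrpow_mul_mul_mrpow (s t : ℝ) (X : Matrix (Fin n) (Fin n) ℂ) :
    eigenCoords hA hB (mrpow A s * X * mrpow B t) =
      diagonal (fun i => ((hA.eigenvalues i ^ s : ℝ) : ℂ)) * eigenCoords hA hB X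
        * diagonal (fun j => ((hB.eigenvalues j ^ t : ℝ) : ℂ)) := by
  simp only [eigenCoords, LinearMap.coe_mk, AddHom.coe_mk, mrpow_of_isHermitian hA,
    mrpow_of_isHermitian hB, mul_assoc, Unitary.star_mul_self_of_mem hB.eigenvectorUnitary.2,
    mul_one]
  simp only [← mul_assoc, Unitary.star_mul_self_of_mem hA.eigenvectorUnitary.2, one_mul]

lemma eigenCoords_mrpow_mul_mul_mrpow_apply (s t : ℝ) (X : Matrix (Fin n) (Fin n) ℂ)
    (i j : Fin n) :
    eigenCoords hA hB (mrpow A s * X * mrpow B t) i j =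
      ((hA.eigenvalues i ^ s * hB.eigenvalues j ^ t : ℝ) : ℂ) * eigenCoords hA hB X i j := by
  rw [eigenCoords_mrpow_mul_mul_mrpow, mul_diagonal, diagonal_mul]
  push_cast; ring

lemma eigenCoords_mul_apply_left (X : Matrix (Fin n) (Fin n) ℂ) (i j : Fin n) :
    eigenCoords hA hB (A * X) i j = (hA.eigenvalues i : ℂ) * eigenCoords hA hB X i j := by
  simpa [mrpow_one hA, mrpow_zero hB] using eigenCoords_mrpow_mul_mul_mrpow_apply hA hB 1 0 X i j

lemma eigenCoords_mul_apply_right (X : Matrix (Fin n) (Fin n) ℂ) (i j : Fin n) :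
    eigenCoords hA hB (X * B) i j = (hB.eigenvalues j : ℂ) * eigenCoords hA hB X i j := by
  simpa [mrpow_one hB, mrpow_zero hA] using eigenCoords_mrpow_mul_mul_mrpow_apply hA hB 0 1 X i j

lemma frobSq_eq_sum_of_eigenCoords_apply (X E : Matrix (Fin n) (Fin n) ℂ)
    (c : Fin n → Fin n → ℝ)
    (h : ∀ i j, eigenCoords hA hB E i j = c i j * eigenCoords hA hB X i j) :
    frobSq E = ∑ i, ∑ j, c i j ^ 2 * ‖eigenCoords hA hB X i j‖ ^ 2 :=
  frobSq_eigenCoords hA hB E ▸ frobSq_eq_sum_of_apply_eq_mul c h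

end EigenCoords

theorem stmt_18_general {n : ℕ} (A B X : Matrix (Fin n) (Fin n) ℂ) (v Kmin r r1 rh1 : ℝ)
    (hA : A.PosDef) (hB : B.PosDef)
    (hK : Kmin = sInf (Set.range fun p : Fin n × Fin n =>
      Kant (Real.sqrt (hA.1.eigenvalues p.1 / hB.1.eigenvalues p.2))))
    (hr : r = min v (1 - v)) (hr1 : r1 = min (2 * r) (1 - 2 * r))
    (hrh1 : rh1 = min (2 * r1) (1 - 2 * r1))
    (hv0 : 0 < v) (hv : v ≤ 1 / 2) :
    frobSq (((1 - v : ℝ) : ℂ) • (A * X) + ((v : ℝ) : ℂ) • (X * B))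
        - (1 - v) ^ 2 * frobSq (A * X - X * B) ≤
      Kmin ^ (-rh1) * frobSq (mrpow A (1 - v) * X * mrpow B v)
        - r1 * frobSq (mrpow A (1 / 2) * X * mrpow B (1 / 2) - X * B) := by
  set lam := hA.1.eigenvalues
  set nu := hB.1.eigenvalues
  set Y := eigenCoords hA.1 hB.1 X
  have hfrob := frobSq_eq_sum_of_eigenCoords_apply hA.1 hB.1 X
  rw [hfrob _ (fun i j => (1 - v) * lam i + v * nu j) fun i j => by
      simp only [map_add, map_smul, Matrix.add_apply, Matrix.smul_apply, smul_eq_mul,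
        eigenCoords_mul_apply_left, eigenCoords_mul_apply_right]
      push_cast; ring,
    hfrob _ (fun i j => lam i - nu j) fun i j => by
      rw [map_sub, Matrix.sub_apply, eigenCoords_mul_apply_left, eigenCoords_mul_apply_right]
      push_cast; ring,
    hfrob _ (fun i j => lam i ^ (1 - v) * nu j ^ v)
      (eigenCoords_mrpow_mul_mul_mrpow_apply _ _ _ _ X),
    hfrob _ (fun i j => lam i ^ (1 / 2 : ℝ) * nu j ^ (1 / 2 : ℝ) - nu j) fun i j => by
      rw [map_sub, Matrix.sub_apply, eigenCoords_mrpow_mul_mul_mrpow_apply,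
        eigenCoords_mul_apply_right]
      push_cast; ring]
  have hr1' : r1 = min (2 * v) (1 - 2 * v) := by
    rw [hr1, hr.trans (min_eq_left (by linarith))]
  have hentry (i j : Fin n) :
      ((1 - v) * lam i + v * nu j) ^ 2 - (1 - v) ^ 2 * (lam i - nu j) ^ 2 ≤
        Kmin ^ (-rh1) * (lam i ^ (1 - v) * nu j ^ v) ^ 2
          - r1 * (lam i ^ (1 / 2 : ℝ) * nu j ^ (1 / 2 : ℝ) - nu j) ^ 2 := by
    have hKant_pos (p : Fin n × Fin n) : 0 < Kant (Real.sqrt (lam p.1 / nu p.2)) :=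
      kant_pos (Real.sqrt_pos.2 (div_pos (hA.eigenvalues_pos _) (hB.eigenvalues_pos _)))
    have : Nonempty (Fin n × Fin n) := ⟨(i, j)⟩
    have hKmin_pos : 0 < Kmin := hK ▸ ((Set.finite_range _).lt_csInf_iff
      (Set.range_nonempty _)).2 (Set.forall_mem_range.2 hKant_pos)
    exact refined_young_sq (hA.eigenvalues_pos i) (hB.eigenvalues_pos j) hv0 hv hr1' hrh1
      hKmin_pos (hK ▸ csInf_le (Set.finite_range _).bddBelow ⟨(i, j), rfl⟩)
  simp only [Finset.mul_sum, ← Finset.sum_sub_distrib]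
  refine Finset.sum_le_sum fun i _ => Finset.sum_le_sum fun j _ => ?_
  nlinarith [mul_le_mul_of_nonneg_right (hentry i j) (sq_nonneg ‖Y i j‖)]

theorem stmt_18 {n : ℕ} (A B X : Matrix (Fin n) (Fin n) ℂ) (v Kmin r r1 rh1 : ℝ)
    (hn : 0 < n) (hA : A.PosDef) (hB : B.PosDef)
    (hK : Kmin = sInf (Set.range fun p : Fin n × Fin n =>
      Kant (Real.sqrt (hA.1.eigenvalues p.1 / hB.1.eigenvalues p.2))))
    (hr : r = min v (1 - v)) (hr1 : r1 = min (2 * r) (1 - 2 * r))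
    (hrh1 : rh1 = min (2 * r1) (1 - 2 * r1))
    (hv0 : 0 < v) (hv : v ≤ 1 / 2) :
    frobSq (((1 - v : ℝ) : ℂ) • (A * X) + ((v : ℝ) : ℂ) • (X * B))
        - (1 - v) ^ 2 * frobSq (A * X - X * B) ≤
      Kmin ^ (-rh1) * frobSq (mrpow A (1 - v) * X * mrpow B v)
        - r1 * frobSq (mrpow A (1 / 2) * X * mrpow B (1 / 2) - X * B) :=
  stmt_18_general A B X v Kmin r r1 rh1 hA hB hK hr hr1 hrh1 hv0 hv
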